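/- For every LDLf formula φ over a finite set P of atomic propositions there exists a nondeterministic finite automaton A_φ over the alphabet 2^P such that for every finite trace π (viewed as a word over 2^P), A_φ accepts π if and only if π ⊨ φ; moreover A_φ can be chosen with at most 2^{s(φ)+2} states, where s(φ) is the number of subformulas and path-expression subterms of φ (a quantity linear in the size of φ), so the number of states is at most exponential in the size of φ. -/
import Mathlib


/-- Propositional formulas over atomic propositions `P`. -/
inductive PropForm (P : Type) : Type
  | tru : PropForm P
  | atom : P → PropForm P
  | not : PropForm P → PropForm P
  | and : PropForm P → PropForm P → PropForm P

/-- Satisfaction of a propositional formula by an interpretation (subset of `P`). -/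
def PropForm.Sat {P : Type} (I : Set P) : PropForm P → Prop
  | .tru => True
  | .atom p => p ∈ I
  | .not ϕ => ¬ PropForm.Sat I ϕ
  | .and ϕ ψ => PropForm.Sat I ϕ ∧ PropForm.Sat I ψ

mutual
/-- LDLf formulas over atomic propositions `P`. -/
inductive LDLf (P : Type) : Type
  | tt : LDLf P
  | neg : LDLf P → LDLf P
  | conj : LDLf P → LDLf P → LDLf P
  | dia : PathExp P → LDLf P → LDLf P

/-- Path expressions of LDLf. -/
inductive PathExp (P : Type) : Type
  | prop : PropForm P → PathExp P
  | test : LDLf P → PathExp P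
  | plus : PathExp P → PathExp P → PathExp P
  | comp : PathExp P → PathExp P → PathExp P
  | star : PathExp P → PathExp P
end

mutual
/-- `LDLf.SatAt π φ i` : the LDLf formula `φ` is true at position `i` of the finite trace `π`. -/
def LDLf.SatAt {P : Type} (π : List (Set P)) : LDLf P → ℕ → Prop
  | .tt => fun _ => True
  | .neg φ => fun i => ¬ LDLf.SatAt π φ i
  | .conj φ₁ φ₂ => fun i => LDLf.SatAt π φ₁ i ∧ LDLf.SatAt π φ₂ i
  | .dia ρ φ => fun i => ∃ j, i ≤ j ∧ j ≤ π.length ∧ PathExp.Sem π ρ i j ∧ LDLf.SatAt π φ j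

/-- `PathExp.Sem π ρ i j` : the relation `π(i,j) ∈ L(ρ)`. -/
def PathExp.Sem {P : Type} (π : List (Set P)) : PathExp P → ℕ → ℕ → Prop
  | .prop ϕ => fun i j => j = i + 1 ∧ j ≤ π.length ∧ PropForm.Sat (π.getD i ∅) ϕ
  | .test ψ => fun i j => j = i ∧ LDLf.SatAt π ψ i
  | .plus ρ₁ ρ₂ => fun i j => PathExp.Sem π ρ₁ i j ∨ PathExp.Sem π ρ₂ i j
  | .comp ρ₁ ρ₂ => fun i j => ∃ k, PathExp.Sem π ρ₁ i k ∧ PathExp.Sem π ρ₂ k j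
  | .star ρ => Relation.ReflTransGen (PathExp.Sem π ρ)
end

/-- `[ρ]φ ≐ ¬⟨ρ⟩¬φ`. -/
def LDLf.box {P : Type} (ρ : PathExp P) (φ : LDLf P) : LDLf P := .neg (.dia ρ (.neg φ))

/-- `ff ≐ ¬tt`. -/
def LDLf.ff {P : Type} : LDLf P := .neg .tt

/-- A propositional formula `ϕ` used as an LDLf formula stands for `⟨ϕ⟩tt`. -/
def LDLf.ofProp {P : Type} (ϕ : PropForm P) : LDLf P := .dia (.prop ϕ) .tt

/-- `end ≐ [true?]ff`. -/
def LDLf.endf {P : Type} : LDLf P := LDLf.box (.test (LDLf.ofProp .tru)) LDLf.ff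

/-- `last ≐ [true]end`. -/
def LDLf.lastf {P : Type} : LDLf P := LDLf.box (.prop .tru) LDLf.endf

/-- `π ⊨ φ` means `π,0 ⊨ φ`. -/
def LDLf.Sat {P : Type} (π : List (Set P)) (φ : LDLf P) : Prop := LDLf.SatAt π φ 0

mutual
/-- Number of subformulas / path-expression subterms of an LDLf formula. -/
def LDLf.size {P : Type} : LDLf P → ℕ
  | .tt => 1
  | .neg φ => LDLf.size φ + 1
  | .conj φ₁ φ₂ => LDLf.size φ₁ + LDLf.size φ₂ + 1
  | .dia ρ φ => PathExp.size ρ + LDLf.size φ + 1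

/-- Number of subterms of a path expression. -/
def PathExp.size {P : Type} : PathExp P → ℕ
  | .prop _ => 1
  | .test ψ => LDLf.size ψ + 1
  | .plus ρ₁ ρ₂ => PathExp.size ρ₁ + PathExp.size ρ₂ + 1
  | .comp ρ₁ ρ₂ => PathExp.size ρ₁ + PathExp.size ρ₂ + 1
  | .star ρ => PathExp.size ρ + 1
end


section LdlfNfaConstruction
variable {P : Type}
namespace LdlfNfa


mutual
/-- Fischer–Ladner style closure of an LDLf formula. -/
def CL : LDLf P → Set (LDLf P)
  | .tt => {.tt}
  | .neg φ => insert (.neg φ) (CL φ)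
  | .conj φ ψ => insert (.conj φ ψ) (CL φ ∪ CL ψ)
  | .dia ρ φ => CLD ρ φ ∪ CL φ
termination_by φ => LDLf.size φ
decreasing_by all_goals (simp [LDLf.size, PathExp.size] <;> omega)

/-- Closure contribution of a diamond `⟨ρ⟩φ`. -/
def CLD : PathExp P → LDLf P → Set (LDLf P)
  | .prop ϕ, φ => {.dia (.prop ϕ) φ}
  | .test ψ, φ => insert (.dia (.test ψ) φ) (CL ψ)
  | .plus ρ₁ ρ₂, φ => insert (.dia (.plus ρ₁ ρ₂) φ) (CLD ρ₁ φ ∪ CLD ρ₂ φ)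
  | .comp ρ₁ ρ₂, φ => insert (.dia (.comp ρ₁ ρ₂) φ) (CLD ρ₁ (.dia ρ₂ φ) ∪ CLD ρ₂ φ)
  | .star ρ, φ => insert (.dia (.star ρ) φ) (CLD ρ (.dia (.star ρ) φ))
termination_by ρ _ => PathExp.size ρ
decreasing_by all_goals (simp [LDLf.size, PathExp.size] <;> omega)
end

theorem mem_CLD_self (ρ : PathExp P) (φ : LDLf P) : LDLf.dia ρ φ ∈ CLD ρ φ := by
  cases ρ <;> simp [CLD]

theorem mem_CL_self (φ : LDLf P) : φ ∈ CL φ := by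
  cases φ <;> simp [CL] <;> try exact Or.inl (mem_CLD_self _ _)

mutual
theorem CL_finite : ∀ φ : LDLf P, (CL φ).Finite
  | .tt => by simp only [CL]; exact Set.finite_singleton _
  | .neg φ => by simp only [CL]; exact ((CL_finite φ).insert _)
  | .conj φ ψ => by simp only [CL]; exact (((CL_finite φ).union (CL_finite ψ)).insert _)
  | .dia ρ φ => by simp only [CL]; exact ((CLD_finite ρ φ).union (CL_finite φ))
termination_by φ => LDLf.size φ
decreasing_by all_goals (simp [LDLf.size, PathExp.size] <;> omega)

theorem CLD_finite : ∀ (ρ : PathExp P) (φ : LDLf P), (CLD ρ φ).Finite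
  | .prop _, _ => by simp only [CLD]; exact Set.finite_singleton _
  | .test ψ, _ => by simp only [CLD]; exact ((CL_finite ψ).insert _)
  | .plus ρ₁ ρ₂, φ => by simp only [CLD]; exact (((CLD_finite ρ₁ φ).union (CLD_finite ρ₂ φ)).insert _)
  | .comp ρ₁ ρ₂, φ => by simp only [CLD]; exact (((CLD_finite ρ₁ _).union (CLD_finite ρ₂ φ)).insert _)
  | .star ρ, φ => by simp only [CLD]; exact ((CLD_finite ρ _).insert _)
termination_by ρ _ => PathExp.size ρ
decreasing_by all_goals (simp [LDLf.size, PathExp.size] <;> omega)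
end

theorem CL_unfold (φ : LDLf P) : CL φ = (match φ with
  | .tt => {.tt}
  | .neg φ => insert (.neg φ) (CL φ)
  | .conj φ ψ => insert (.conj φ ψ) (CL φ ∪ CL ψ)
  | .dia ρ φ => CLD ρ φ ∪ CL φ) := by
  cases φ <;> simp [CL]

theorem CLD_unfold (ρ : PathExp P) (φ : LDLf P) : CLD ρ φ = (match ρ with
  | .prop ϕ => {.dia (.prop ϕ) φ}
  | .test ψ => insert (.dia (.test ψ) φ) (CL ψ)
  | .plus ρ₁ ρ₂ => insert (.dia (.plus ρ₁ ρ₂) φ) (CLD ρ₁ φ ∪ CLD ρ₂ φ)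
  | .comp ρ₁ ρ₂ => insert (.dia (.comp ρ₁ ρ₂) φ) (CLD ρ₁ (.dia ρ₂ φ) ∪ CLD ρ₂ φ)
  | .star ρ => insert (.dia (.star ρ) φ) (CLD ρ (.dia (.star ρ) φ))) := by
  cases ρ <;> simp [CLD]

mutual
theorem CL_ncard : ∀ φ : LDLf P, (CL φ).ncard ≤ LDLf.size φ
  | .tt => by simp [CL, LDLf.size]
  | .neg φ => by
      have := CL_ncard φ
      simp only [CL, LDLf.size]
      calc (insert (LDLf.neg φ) (CL φ)).ncard ≤ (CL φ).ncard + 1 := Set.ncard_insert_le _ _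
        _ ≤ _ := by omega
  | .conj φ ψ => by
      have h1 := CL_ncard φ; have h2 := CL_ncard ψ
      simp only [CL, LDLf.size]
      calc (insert (LDLf.conj φ ψ) (CL φ ∪ CL ψ)).ncard ≤ (CL φ ∪ CL ψ).ncard + 1 :=
            Set.ncard_insert_le _ _
        _ ≤ (CL φ).ncard + (CL ψ).ncard + 1 := by
            have := Set.ncard_union_le (CL φ) (CL ψ); omega
        _ ≤ _ := by omega
  | .dia ρ φ => by
      have h1 := CLD_ncard ρ φ; have h2 := CL_ncard φ
      simp only [CL, LDLf.size]
      calc (CLD ρ φ ∪ CL φ).ncard ≤ (CLD ρ φ).ncard + (CL φ).ncard :=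
            Set.ncard_union_le _ _
        _ ≤ _ := by omega
termination_by φ => LDLf.size φ
decreasing_by all_goals (simp [LDLf.size, PathExp.size] <;> omega)

theorem CLD_ncard : ∀ (ρ : PathExp P) (φ : LDLf P), (CLD ρ φ).ncard ≤ PathExp.size ρ
  | .prop ϕ, φ => by simp [CLD, PathExp.size]
  | .test ψ, φ => by
      have := CL_ncard ψ
      simp only [CLD, PathExp.size]
      have := Set.ncard_insert_le (LDLf.dia (.test ψ) φ) (CL ψ); omega
  | .plus ρ₁ ρ₂, φ => by
      have h1 := CLD_ncard ρ₁ φ; have h2 := CLD_ncard ρ₂ φ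
      simp only [CLD, PathExp.size]
      have h3 := Set.ncard_insert_le (LDLf.dia (.plus ρ₁ ρ₂) φ) (CLD ρ₁ φ ∪ CLD ρ₂ φ)
      have h4 := Set.ncard_union_le (CLD ρ₁ φ) (CLD ρ₂ φ); omega
  | .comp ρ₁ ρ₂, φ => by
      have h1 := CLD_ncard ρ₁ (.dia ρ₂ φ); have h2 := CLD_ncard ρ₂ φ
      simp only [CLD, PathExp.size]
      have h3 := Set.ncard_insert_le (LDLf.dia (.comp ρ₁ ρ₂) φ)
        (CLD ρ₁ (.dia ρ₂ φ) ∪ CLD ρ₂ φ)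
      have h4 := Set.ncard_union_le (CLD ρ₁ (.dia ρ₂ φ)) (CLD ρ₂ φ); omega
  | .star ρ, φ => by
      have h1 := CLD_ncard ρ (.dia (.star ρ) φ)
      simp only [CLD, PathExp.size]
      have h2 := Set.ncard_insert_le (LDLf.dia (.star ρ) φ) (CLD ρ (.dia (.star ρ) φ)); omega
termination_by ρ _ => PathExp.size ρ
decreasing_by all_goals (simp [LDLf.size, PathExp.size] <;> omega)
end
/-- One-step "subformula/derivative" successors used for closure. -/
def Next : LDLf P → Set (LDLf P)
  | .tt => ∅
  | .neg ψ => {ψ}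
  | .conj ψ χ => {ψ, χ}
  | .dia ρ χ =>
    match ρ with
    | .prop _ => {χ}
    | .test ψ => {ψ, χ}
    | .plus ρ₁ ρ₂ => {LDLf.dia ρ₁ χ, LDLf.dia ρ₂ χ, χ}
    | .comp ρ₁ ρ₂ => {LDLf.dia ρ₁ (LDLf.dia ρ₂ χ), LDLf.dia ρ₂ χ, χ}
    | .star ρ₁ => {LDLf.dia ρ₁ (LDLf.dia (.star ρ₁) χ), χ}

/-- A set of formulas is closed if it contains all one-step successors of its members. -/
def Closed (S : Set (LDLf P)) : Prop := ∀ ψ ∈ S, Next ψ ⊆ S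

mutual
theorem nextCL : ∀ φ : LDLf P, ∀ ψ ∈ CL φ, Next ψ ⊆ CL φ
  | .tt => by
      intro ψ hψ x hx
      simp only [CL, Set.mem_singleton_iff] at hψ
      subst hψ
      simp [Next] at hx
  | .neg φ => by
      intro ψ hψ x hx
      simp only [CL, Set.mem_insert_iff] at hψ ⊢
      rcases hψ with rfl | h
      · simp only [Next, Set.mem_singleton_iff] at hx
        subst hx; exact Or.inr (mem_CL_self _)
      · exact Or.inr (nextCL φ ψ h hx)
  | .conj φ₁ φ₂ => by
      intro ψ hψ x hx
      simp only [CL, Set.mem_insert_iff, Set.mem_union] at hψ ⊢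
      rcases hψ with rfl | h | h
      · simp only [Next, Set.mem_insert_iff, Set.mem_singleton_iff] at hx
        rcases hx with rfl | rfl
        · exact Or.inr (Or.inl (mem_CL_self _))
        · exact Or.inr (Or.inr (mem_CL_self _))
      · exact Or.inr (Or.inl (nextCL φ₁ ψ h hx))
      · exact Or.inr (Or.inr (nextCL φ₂ ψ h hx))
  | .dia ρ φ => by
      intro ψ hψ x hx
      simp only [CL, Set.mem_union] at hψ ⊢
      rcases hψ with h | h
      · exact nextCLD ρ φ ψ h hx
      · exact Or.inr (nextCL φ ψ h hx)
termination_by φ => LDLf.size φ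
decreasing_by all_goals (simp [LDLf.size, PathExp.size] <;> omega)

theorem nextCLD : ∀ (ρ : PathExp P) (χ : LDLf P), ∀ ψ ∈ CLD ρ χ, Next ψ ⊆ CLD ρ χ ∪ CL χ
  | .prop ϕ, χ => by
      intro ψ hψ x hx
      simp only [CLD, Set.mem_singleton_iff] at hψ
      subst hψ
      simp only [Next, Set.mem_singleton_iff] at hx
      subst hx; exact Or.inr (mem_CL_self _)
  | .test ψ₀, χ => by
      intro ψ hψ x hx
      simp only [CLD, Set.mem_insert_iff, Set.mem_union] at hψ ⊢
      rcases hψ with rfl | h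
      · simp only [Next, Set.mem_insert_iff, Set.mem_singleton_iff] at hx
        rcases hx with rfl | rfl
        · exact Or.inl (Or.inr (mem_CL_self _))
        · exact Or.inr (mem_CL_self _)
      · exact Or.inl (Or.inr (nextCL ψ₀ ψ h hx))
  | .plus ρ₁ ρ₂, χ => by
      intro ψ hψ x hx
      simp only [CLD, Set.mem_insert_iff, Set.mem_union] at hψ ⊢
      rcases hψ with rfl | h | h
      · simp only [Next, Set.mem_insert_iff, Set.mem_singleton_iff] at hx
        rcases hx with rfl | rfl | rfl
        · exact Or.inl (Or.inr (Or.inl (mem_CLD_self _ _)))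
        · exact Or.inl (Or.inr (Or.inr (mem_CLD_self _ _)))
        · exact Or.inr (mem_CL_self _)
      · rcases nextCLD ρ₁ χ ψ h hx with h' | h'
        · exact Or.inl (Or.inr (Or.inl h'))
        · exact Or.inr h'
      · rcases nextCLD ρ₂ χ ψ h hx with h' | h'
        · exact Or.inl (Or.inr (Or.inr h'))
        · exact Or.inr h'
  | .comp ρ₁ ρ₂, χ => by
      intro ψ hψ x hx
      simp only [CLD, Set.mem_insert_iff, Set.mem_union] at hψ ⊢
      rcases hψ with rfl | h | h
      · simp only [Next, Set.mem_insert_iff, Set.mem_singleton_iff] at hx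
        rcases hx with rfl | rfl | rfl
        · exact Or.inl (Or.inr (Or.inl (mem_CLD_self _ _)))
        · exact Or.inl (Or.inr (Or.inr (mem_CLD_self _ _)))
        · exact Or.inr (mem_CL_self _)
      · rcases nextCLD ρ₁ (.dia ρ₂ χ) ψ h hx with h' | h'
        · exact Or.inl (Or.inr (Or.inl h'))
        · simp only [CL, Set.mem_union] at h'
          rcases h' with h' | h'
          · exact Or.inl (Or.inr (Or.inr h'))
          · exact Or.inr h'
      · rcases nextCLD ρ₂ χ ψ h hx with h' | h'
        · exact Or.inl (Or.inr (Or.inr h'))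
        · exact Or.inr h'
  | .star ρ, χ => by
      intro ψ hψ x hx
      simp only [CLD, Set.mem_insert_iff, Set.mem_union] at hψ ⊢
      rcases hψ with rfl | h
      · simp only [Next, Set.mem_insert_iff, Set.mem_singleton_iff] at hx
        rcases hx with rfl | rfl
        · exact Or.inl (Or.inr (mem_CLD_self _ _))
        · exact Or.inr (mem_CL_self _)
      · rcases nextCLD ρ (.dia (.star ρ) χ) ψ h hx with h' | h'
        · exact Or.inl (Or.inr h')
        · simp only [CL, CLD, Set.mem_union, Set.mem_insert_iff] at h'
          rcases h' with (rfl | h') | h'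
          · exact Or.inl (Or.inl rfl)
          · exact Or.inl (Or.inr h')
          · exact Or.inr h'
termination_by ρ _ => PathExp.size ρ
decreasing_by all_goals (simp [LDLf.size, PathExp.size] <;> omega)
end

theorem closed_CL (φ : LDLf P) : Closed (CL φ) := nextCL φ
theorem Sem_le {π : List (Set P)} : ∀ (ρ : PathExp P) {i j : ℕ}, PathExp.Sem π ρ i j → i ≤ j
  | .prop ϕ, i, j => by
      simp only [PathExp.Sem]; rintro ⟨rfl, -, -⟩; omega
  | .test ψ, i, j => by
      simp only [PathExp.Sem]; rintro ⟨rfl, -⟩; omega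
  | .plus ρ₁ ρ₂, i, j => by
      simp only [PathExp.Sem]
      rintro (h | h)
      · exact Sem_le ρ₁ h
      · exact Sem_le ρ₂ h
  | .comp ρ₁ ρ₂, i, j => by
      simp only [PathExp.Sem]
      rintro ⟨k, h1, h2⟩
      exact le_trans (Sem_le ρ₁ h1) (Sem_le ρ₂ h2)
  | .star ρ, i, j => by
      simp only [PathExp.Sem]
      intro h
      induction h with
      | refl => exact le_refl _
      | tail _ hstep ih => exact le_trans ih (Sem_le ρ hstep)
termination_by ρ => PathExp.size ρ
decreasing_by all_goals (simp [LDLf.size, PathExp.size] <;> omega)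

/-- A progressing unfolding of star. -/
theorem star_unfold {π : List (Set P)} {ρ : PathExp P} {i j : ℕ}
    (h : PathExp.Sem π (.star ρ) i j) :
    i = j ∨ ∃ k, i < k ∧ PathExp.Sem π ρ i k ∧ PathExp.Sem π (.star ρ) k j := by
  simp only [PathExp.Sem] at h ⊢
  induction h using Relation.ReflTransGen.head_induction_on with
  | refl => exact Or.inl rfl
  | head hstep htail ih =>
    rename_i b c
    rcases Nat.lt_or_ge b c with hlt | hge
    · exact Or.inr ⟨c, hlt, hstep, htail⟩
    · have : b = c := le_antisymm (Sem_le ρ hstep) hge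
      subst this
      exact ih
mutual
theorem shiftF {a : Set P} {π : List (Set P)} :
    ∀ (ψ : LDLf P) (i : ℕ), LDLf.SatAt (a :: π) ψ (i + 1) ↔ LDLf.SatAt π ψ i
  | .tt, i => by simp [LDLf.SatAt]
  | .neg ψ, i => by
      simp only [LDLf.SatAt]
      exact not_congr (shiftF ψ i)
  | .conj ψ₁ ψ₂, i => by
      simp only [LDLf.SatAt]
      exact and_congr (shiftF ψ₁ i) (shiftF ψ₂ i)
  | .dia ρ ψ, i => by
      simp only [LDLf.SatAt]
      constructor
      · rintro ⟨j, hij, hlen, hsem, hsat⟩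
        obtain ⟨j', rfl⟩ : ∃ j', j = j' + 1 := ⟨j - 1, by omega⟩
        refine ⟨j', by omega, by simp at hlen; omega, (shiftP ρ i j').1 hsem, (shiftF ψ j').1 hsat⟩
      · rintro ⟨j, hij, hlen, hsem, hsat⟩
        exact ⟨j + 1, by omega, by simp; omega, (shiftP ρ i j).2 hsem, (shiftF ψ j).2 hsat⟩
termination_by ψ _ => LDLf.size ψ
decreasing_by all_goals (simp [LDLf.size, PathExp.size] <;> omega)

theorem shiftP {a : Set P} {π : List (Set P)} :
    ∀ (ρ : PathExp P) (i j : ℕ), PathExp.Sem (a :: π) ρ (i + 1) (j + 1) ↔ PathExp.Sem π ρ i j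
  | .prop ϕ, i, j => by
      simp only [PathExp.Sem, List.getD_cons_succ, List.length_cons]
      constructor
      · rintro ⟨h1, h2, h3⟩; exact ⟨by omega, by omega, h3⟩
      · rintro ⟨h1, h2, h3⟩; exact ⟨by omega, by omega, h3⟩
  | .test ψ, i, j => by
      simp only [PathExp.Sem]
      exact and_congr (by omega) (shiftF ψ i)
  | .plus ρ₁ ρ₂, i, j => by
      simp only [PathExp.Sem]
      exact or_congr (shiftP ρ₁ i j) (shiftP ρ₂ i j)
  | .comp ρ₁ ρ₂, i, j => by
      simp only [PathExp.Sem]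
      constructor
      · rintro ⟨k, h1, h2⟩
        obtain ⟨k', rfl⟩ : ∃ k', k = k' + 1 := ⟨k - 1, by have := Sem_le ρ₁ h1; omega⟩
        exact ⟨k', (shiftP ρ₁ i k').1 h1, (shiftP ρ₂ k' j).1 h2⟩
      · rintro ⟨k, h1, h2⟩
        exact ⟨k + 1, (shiftP ρ₁ i k).2 h1, (shiftP ρ₂ k j).2 h2⟩
  | .star ρ, i, j => by
      simp only [PathExp.Sem]
      constructor
      · intro h
        have key : ∀ b, Relation.ReflTransGen (PathExp.Sem (a :: π) ρ) (i + 1) b →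
            ∃ b', b = b' + 1 ∧ Relation.ReflTransGen (PathExp.Sem π ρ) i b' := by
          intro b hb
          induction hb with
          | refl => exact ⟨i, rfl, Relation.ReflTransGen.refl⟩
          | tail hcb hstep ih =>
            rename_i c b2
            obtain ⟨c', rfl, hc⟩ := ih
            obtain ⟨b'', rfl⟩ : ∃ b'', b2 = b'' + 1 := ⟨b2 - 1, by have := Sem_le ρ hstep; omega⟩
            exact ⟨b'', rfl, hc.tail ((shiftP ρ c' b'').1 hstep)⟩
        obtain ⟨b', hb', h'⟩ := key _ h
        obtain rfl : j = b' := by omega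
        exact h'
      · intro h
        induction h with
        | refl => exact Relation.ReflTransGen.refl
        | tail _ hstep ih =>
          exact ih.tail ((shiftP ρ _ _).2 hstep)
termination_by ρ _ _ => PathExp.size ρ
decreasing_by all_goals (simp [LDLf.size, PathExp.size] <;> omega)
end
/-- The "progressing diamond" condition: `ρ` makes at least one letter-consuming step
from position `0`, ending in a position satisfying `χ`. -/
def TPc (π : List (Set P)) (ρ : PathExp P) (χ : LDLf P) : Prop :=
  ∃ k, 1 ≤ k ∧ k ≤ π.length ∧ PathExp.Sem π ρ 0 k ∧ LDLf.SatAt π χ k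

theorem satAt_dia_zero {π : List (Set P)} {ρ : PathExp P} {χ : LDLf P} :
    LDLf.SatAt π (.dia ρ χ) 0 ↔ (PathExp.Sem π ρ 0 0 ∧ LDLf.SatAt π χ 0) ∨ TPc π ρ χ := by
  simp only [LDLf.SatAt, TPc]
  constructor
  · rintro ⟨j, -, hlen, hsem, hsat⟩
    rcases Nat.eq_zero_or_pos j with rfl | hj
    · exact Or.inl ⟨hsem, hsat⟩
    · exact Or.inr ⟨j, hj, hlen, hsem, hsat⟩
  · rintro (⟨h1, h2⟩ | ⟨k, h1, h2, h3, h4⟩)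
    · exact ⟨0, le_refl _, Nat.zero_le _, h1, h2⟩
    · exact ⟨k, Nat.zero_le _, h2, h3, h4⟩

theorem TPc_prop {π : List (Set P)} {ϕ : PropForm P} {χ : LDLf P} :
    TPc π (.prop ϕ) χ ↔ 1 ≤ π.length ∧ PropForm.Sat (π.getD 0 ∅) ϕ ∧ LDLf.SatAt π χ 1 := by
  simp only [TPc, PathExp.Sem]
  constructor
  · rintro ⟨k, h1, h2, ⟨rfl, h4, h5⟩, h6⟩
    exact ⟨h4, h5, h6⟩
  · rintro ⟨h1, h2, h3⟩
    exact ⟨1, le_refl _, h1, ⟨rfl, h1, h2⟩, h3⟩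

theorem TPc_test {π : List (Set P)} {ψ χ : LDLf P} : TPc π (.test ψ) χ ↔ False := by
  simp only [TPc, PathExp.Sem, iff_false, not_exists]
  rintro k ⟨h1, -, ⟨rfl, -⟩, -⟩
  omega

theorem TPc_plus {π : List (Set P)} {ρ₁ ρ₂ : PathExp P} {χ : LDLf P} :
    TPc π (.plus ρ₁ ρ₂) χ ↔ TPc π ρ₁ χ ∨ TPc π ρ₂ χ := by
  simp only [TPc, PathExp.Sem]
  constructor
  · rintro ⟨k, h1, h2, (h3 | h3), h4⟩
    · exact Or.inl ⟨k, h1, h2, h3, h4⟩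
    · exact Or.inr ⟨k, h1, h2, h3, h4⟩
  · rintro (⟨k, h1, h2, h3, h4⟩ | ⟨k, h1, h2, h3, h4⟩)
    · exact ⟨k, h1, h2, Or.inl h3, h4⟩
    · exact ⟨k, h1, h2, Or.inr h3, h4⟩

theorem TPc_comp {π : List (Set P)} {ρ₁ ρ₂ : PathExp P} {χ : LDLf P} :
    TPc π (.comp ρ₁ ρ₂) χ ↔
      (PathExp.Sem π ρ₁ 0 0 ∧ TPc π ρ₂ χ) ∨ TPc π ρ₁ (.dia ρ₂ χ) := by
  constructor
  · rintro ⟨k, h1, h2, hsem, h4⟩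
    simp only [PathExp.Sem] at hsem
    obtain ⟨m, hm1, hm2⟩ := hsem
    rcases Nat.eq_zero_or_pos m with rfl | hm
    · exact Or.inl ⟨hm1, k, h1, h2, hm2, h4⟩
    · refine Or.inr ⟨m, hm, le_trans (Sem_le ρ₂ hm2) h2, hm1, ?_⟩
      simp only [LDLf.SatAt]
      exact ⟨k, Sem_le ρ₂ hm2, h2, hm2, h4⟩
  · rintro (⟨h0, k, h1, h2, h3, h4⟩ | ⟨m, h1, h2, h3, hsat⟩)
    · exact ⟨k, h1, h2, by simp only [PathExp.Sem]; exact ⟨0, h0, h3⟩, h4⟩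
    · simp only [LDLf.SatAt] at hsat
      obtain ⟨k, hk1, hk2, hk3, hk4⟩ := hsat
      exact ⟨k, le_trans h1 hk1, hk2, by simp only [PathExp.Sem]; exact ⟨m, h3, hk3⟩, hk4⟩

theorem TPc_star {π : List (Set P)} {ρ : PathExp P} {χ : LDLf P} :
    TPc π (.star ρ) χ ↔ TPc π ρ (.dia (.star ρ) χ) := by
  constructor
  · rintro ⟨k, h1, h2, hsem, h4⟩
    obtain (rfl | ⟨m, hm1, hm2, hm3⟩) := star_unfold hsem
    · omega
    · refine ⟨m, hm1, le_trans (Sem_le _ hm3) h2, hm2, ?_⟩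
      simp only [LDLf.SatAt]
      exact ⟨k, Sem_le _ hm3, h2, hm3, h4⟩
  · rintro ⟨m, h1, h2, h3, hsat⟩
    simp only [LDLf.SatAt] at hsat
    obtain ⟨k, hk1, hk2, hk3, hk4⟩ := hsat
    refine ⟨k, le_trans h1 hk1, hk2, ?_, hk4⟩
    simp only [PathExp.Sem] at hk3 ⊢
    exact Relation.ReflTransGen.head h3 hk3

theorem Sem_comp_zero {π : List (Set P)} {ρ₁ ρ₂ : PathExp P} :
    PathExp.Sem π (.comp ρ₁ ρ₂) 0 0 ↔ PathExp.Sem π ρ₁ 0 0 ∧ PathExp.Sem π ρ₂ 0 0 := by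
  simp only [PathExp.Sem]
  constructor
  · rintro ⟨k, h1, h2⟩
    obtain rfl : k = 0 := by have := Sem_le ρ₂ h2; omega
    exact ⟨h1, h2⟩
  · rintro ⟨h1, h2⟩; exact ⟨0, h1, h2⟩
section ClosedFacts
variable {S : Set (LDLf P)}

theorem closed_dia_chi (hS : Closed S) {ρ : PathExp P} {χ : LDLf P}
    (h : LDLf.dia ρ χ ∈ S) : χ ∈ S := by
  refine hS _ h ?_
  cases ρ <;> simp [Next]

theorem closed_neg (hS : Closed S) {ψ : LDLf P} (h : LDLf.neg ψ ∈ S) : ψ ∈ S :=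
  hS _ h (by simp [Next])

theorem closed_conj₁ (hS : Closed S) {ψ χ : LDLf P} (h : LDLf.conj ψ χ ∈ S) : ψ ∈ S :=
  hS _ h (by simp [Next])

theorem closed_conj₂ (hS : Closed S) {ψ χ : LDLf P} (h : LDLf.conj ψ χ ∈ S) : χ ∈ S :=
  hS _ h (by simp [Next])

theorem closed_test (hS : Closed S) {ψ χ : LDLf P} (h : LDLf.dia (.test ψ) χ ∈ S) : ψ ∈ S :=
  hS _ h (by simp [Next])

theorem closed_plus₁ (hS : Closed S) {ρ₁ ρ₂ : PathExp P} {χ : LDLf P}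
    (h : LDLf.dia (.plus ρ₁ ρ₂) χ ∈ S) : LDLf.dia ρ₁ χ ∈ S :=
  hS _ h (by simp [Next])

theorem closed_plus₂ (hS : Closed S) {ρ₁ ρ₂ : PathExp P} {χ : LDLf P}
    (h : LDLf.dia (.plus ρ₁ ρ₂) χ ∈ S) : LDLf.dia ρ₂ χ ∈ S :=
  hS _ h (by simp [Next])

theorem closed_comp₁ (hS : Closed S) {ρ₁ ρ₂ : PathExp P} {χ : LDLf P}
    (h : LDLf.dia (.comp ρ₁ ρ₂) χ ∈ S) : LDLf.dia ρ₁ (LDLf.dia ρ₂ χ) ∈ S :=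
  hS _ h (by simp [Next])

theorem closed_comp₂ (hS : Closed S) {ρ₁ ρ₂ : PathExp P} {χ : LDLf P}
    (h : LDLf.dia (.comp ρ₁ ρ₂) χ ∈ S) : LDLf.dia ρ₂ χ ∈ S :=
  hS _ h (by simp [Next])

theorem closed_star (hS : Closed S) {ρ : PathExp P} {χ : LDLf P}
    (h : LDLf.dia (.star ρ) χ ∈ S) : LDLf.dia ρ (LDLf.dia (.star ρ) χ) ∈ S :=
  hS _ h (by simp [Next])

end ClosedFacts

mutual
/-- Transfer of truth of closure formulas at the head of a trace. -/
theorem TA (S : Set (LDLf P)) (hS : Closed S) (a : Set P) (w w' : List (Set P))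
    (H : ∀ χ ∈ S, (LDLf.SatAt w χ 0 ↔ LDLf.SatAt w' χ 0)) :
    ∀ ψ : LDLf P, ψ ∈ S → (LDLf.SatAt (a :: w) ψ 0 ↔ LDLf.SatAt (a :: w') ψ 0)
  | .tt, _ => by simp [LDLf.SatAt]
  | .neg ψ, h => by
      simp only [LDLf.SatAt]
      exact not_congr (TA S hS a w w' H ψ (closed_neg hS h))
  | .conj ψ₁ ψ₂, h => by
      simp only [LDLf.SatAt]
      exact and_congr (TA S hS a w w' H ψ₁ (closed_conj₁ hS h))
        (TA S hS a w w' H ψ₂ (closed_conj₂ hS h))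
  | .dia ρ χ, h => by
      rw [satAt_dia_zero, satAt_dia_zero]
      exact or_congr
        (and_congr (TE S hS a w w' H ρ ⟨χ, h⟩) (TA S hS a w w' H χ (closed_dia_chi hS h)))
        (TP S hS a w w' H ρ χ h)
termination_by ψ _ => LDLf.size ψ
decreasing_by all_goals (simp [LDLf.size, PathExp.size] <;> omega)

/-- Transfer of the zero-step (test-only) part of a path expression. -/
theorem TE (S : Set (LDLf P)) (hS : Closed S) (a : Set P) (w w' : List (Set P))
    (H : ∀ χ ∈ S, (LDLf.SatAt w χ 0 ↔ LDLf.SatAt w' χ 0)) :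
    ∀ ρ : PathExp P, (∃ χ, LDLf.dia ρ χ ∈ S) →
      (PathExp.Sem (a :: w) ρ 0 0 ↔ PathExp.Sem (a :: w') ρ 0 0)
  | .prop ϕ, _ => by simp [PathExp.Sem]
  | .test ψ, h => by
      simp only [PathExp.Sem]
      obtain ⟨χ, hχ⟩ := h
      exact and_congr Iff.rfl (TA S hS a w w' H ψ (closed_test hS hχ))
  | .plus ρ₁ ρ₂, h => by
      simp only [PathExp.Sem]
      obtain ⟨χ, hχ⟩ := h
      exact or_congr (TE S hS a w w' H ρ₁ ⟨χ, closed_plus₁ hS hχ⟩)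
        (TE S hS a w w' H ρ₂ ⟨χ, closed_plus₂ hS hχ⟩)
  | .comp ρ₁ ρ₂, h => by
      rw [Sem_comp_zero, Sem_comp_zero]
      obtain ⟨χ, hχ⟩ := h
      exact and_congr (TE S hS a w w' H ρ₁ ⟨LDLf.dia ρ₂ χ, closed_comp₁ hS hχ⟩)
        (TE S hS a w w' H ρ₂ ⟨χ, closed_comp₂ hS hχ⟩)
  | .star ρ, _ => by
      simp only [PathExp.Sem]
      exact iff_of_true Relation.ReflTransGen.refl Relation.ReflTransGen.refl
termination_by ρ _ => PathExp.size ρ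
decreasing_by all_goals (simp [LDLf.size, PathExp.size] <;> omega)

/-- Transfer of the progressing-diamond condition. -/
theorem TP (S : Set (LDLf P)) (hS : Closed S) (a : Set P) (w w' : List (Set P))
    (H : ∀ χ ∈ S, (LDLf.SatAt w χ 0 ↔ LDLf.SatAt w' χ 0)) :
    ∀ (ρ : PathExp P) (χ : LDLf P), LDLf.dia ρ χ ∈ S →
      (TPc (a :: w) ρ χ ↔ TPc (a :: w') ρ χ)
  | .prop ϕ, χ, h => by
      rw [TPc_prop, TPc_prop]
      have hχ := closed_dia_chi hS h
      simp only [List.length_cons, List.getD_cons_zero]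
      rw [show ((1:ℕ) ≤ w.length + 1) = True by simp, show ((1:ℕ) ≤ w'.length + 1) = True by simp]
      rw [show LDLf.SatAt (a :: w) χ 1 ↔ LDLf.SatAt w χ 0 from shiftF χ 0,
        show LDLf.SatAt (a :: w') χ 1 ↔ LDLf.SatAt w' χ 0 from shiftF χ 0]
      exact and_congr Iff.rfl (and_congr Iff.rfl (H χ hχ))
  | .test ψ, χ, _ => by rw [TPc_test, TPc_test]
  | .plus ρ₁ ρ₂, χ, h => by
      rw [TPc_plus, TPc_plus]
      exact or_congr (TP S hS a w w' H ρ₁ χ (closed_plus₁ hS h))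
        (TP S hS a w w' H ρ₂ χ (closed_plus₂ hS h))
  | .comp ρ₁ ρ₂, χ, h => by
      rw [TPc_comp, TPc_comp]
      exact or_congr
        (and_congr (TE S hS a w w' H ρ₁ ⟨LDLf.dia ρ₂ χ, closed_comp₁ hS h⟩)
          (TP S hS a w w' H ρ₂ χ (closed_comp₂ hS h)))
        (TP S hS a w w' H ρ₁ (LDLf.dia ρ₂ χ) (closed_comp₁ hS h))
  | .star ρ, χ, h => by
      rw [TPc_star, TPc_star]
      exact TP S hS a w w' H ρ (LDLf.dia (.star ρ) χ) (closed_star hS h)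
termination_by ρ _ _ => PathExp.size ρ
decreasing_by all_goals (simp [LDLf.size, PathExp.size] <;> omega)
end

/-- The key transfer lemma: if two traces agree on all closure formulas, then so do their
extensions by a common first letter. -/
theorem transfer {S : Set (LDLf P)} (hS : Closed S) {a : Set P} {w w' : List (Set P)}
    (H : ∀ χ ∈ S, (LDLf.SatAt w χ 0 ↔ LDLf.SatAt w' χ 0)) :
    ∀ ψ ∈ S, (LDLf.SatAt (a :: w) ψ 0 ↔ LDLf.SatAt (a :: w') ψ 0) :=
  TA S hS a w w' H
theorem main {P : Type} [Fintype P] (φ : LDLf P) :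
    ∃ (σ : Type) (inst : Fintype σ) (N : NFA (Set P) σ),
      (∀ π : List (Set P), π ∈ N.accepts ↔ LDLf.Sat π φ) ∧
      @Fintype.card σ inst ≤ 2 ^ (LDLf.size φ + 2) := by
  classical
  have hfin : (CL φ).Finite := CL_finite φ
  letI instCL : Fintype ↥(CL φ) := hfin.fintype
  set σ := (↥(CL φ) → Bool) with hσ
  letI instσ : Fintype σ := inferInstance
  -- the truth vector of a trace
  let tv : List (Set P) → σ := fun w ψ => decide (LDLf.SatAt w ψ.1 0)
  have tv_eq : ∀ w w' : List (Set P), tv w = tv w' ↔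
      (∀ χ ∈ CL φ, (LDLf.SatAt w χ 0 ↔ LDLf.SatAt w' χ 0)) := by
    intro w w'
    constructor
    · intro h χ hχ
      have := congrFun h ⟨χ, hχ⟩
      simpa [tv, decide_eq_decide] using this
    · intro h
      funext ψ
      simp only [tv, decide_eq_decide]
      exact h ψ.1 ψ.2
  let N : NFA (Set P) σ :=
    { step := fun v a => {v' | ∃ u, v' = tv u ∧ v = tv (a :: u)}
      start := {v | v ⟨φ, mem_CL_self φ⟩ = true}
      accept := {tv []} }
  have evalC : ∀ (u : List (Set P)) (S₀ : Set σ) (w : List (Set P)),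
      tv (u ++ w) ∈ S₀ → tv w ∈ N.evalFrom S₀ u := by
    intro u
    induction u with
    | nil => intro S₀ w h; simpa [NFA.evalFrom] using h
    | cons a u ih =>
      intro S₀ w h
      have : tv (u ++ w) ∈ N.stepSet S₀ a := by
        rw [NFA.mem_stepSet]
        exact ⟨tv (a :: (u ++ w)), h, ⟨u ++ w, rfl, rfl⟩⟩
      exact ih _ w this
  have evalD : ∀ (u : List (Set P)) (S₀ : Set σ) (q : σ),
      q ∈ N.evalFrom S₀ u → ∀ w, q = tv w → ∃ q₀ ∈ S₀, q₀ = tv (u ++ w) := by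
    intro u
    induction u with
    | nil =>
      intro S₀ q h w hq
      exact ⟨q, by simpa [NFA.evalFrom] using h, hq⟩
    | cons a u ih =>
      intro S₀ q h w hq
      obtain ⟨q₁, hq₁S, hq₁⟩ := ih (N.stepSet S₀ a) q h w hq
      rw [NFA.mem_stepSet] at hq₁S
      obtain ⟨q₀, hq₀S, u₂, h1, h2⟩ := hq₁S
      refine ⟨q₀, hq₀S, ?_⟩
      have key : tv (a :: u₂) = tv (a :: (u ++ w)) := by
        rw [tv_eq]
        exact transfer (closed_CL φ) ((tv_eq u₂ (u ++ w)).1 (h1 ▸ hq₁))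
      rw [h2, key]
      rfl
  refine ⟨σ, instσ, N, ?_, ?_⟩
  · intro π
    constructor
    · rintro ⟨q, hq, hev⟩
      have hq' : q = tv [] := hq
      subst hq'
      obtain ⟨q₀, hq₀S, hq₀⟩ := evalD π N.start (tv []) hev [] rfl
      have : q₀ ⟨φ, mem_CL_self φ⟩ = true := hq₀S
      rw [hq₀] at this
      simp only [List.append_nil] at this
      have := of_decide_eq_true this
      exact this
    · intro h
      have hstart : tv π ∈ N.start := by
        show tv π ⟨φ, mem_CL_self φ⟩ = true
        simp only [tv, decide_eq_true_eq]
        exact h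
      have := evalC π N.start [] (by simpa using hstart)
      exact ⟨tv [], rfl, this⟩
  · have h1 : Fintype.card ↥(CL φ) = (CL φ).ncard := by
      rw [← Nat.card_eq_fintype_card, Nat.card_coe_set_eq]
    have h2 : Fintype.card σ = 2 ^ Fintype.card ↥(CL φ) := by
      show Fintype.card (↥(CL φ) → Bool) = _
      rw [Fintype.card_fun, Fintype.card_bool]
    rw [h2, h1]
    exact Nat.pow_le_pow_right (by norm_num) (by have := CL_ncard φ; omega)
end LdlfNfa
end LdlfNfaConstruction

/-- For every LDLf formula `φ` over a finite set `P` of atomic propositions there is an NFA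
over the alphabet `2^P` accepting exactly the traces satisfying `φ`, with at most
`2 ^ (s(φ) + 2)` states, where `s(φ)` is the number of subformulas and path-expression
subterms of `φ`. -/
theorem ldlf_to_nfa_exponential {P : Type} [Fintype P] (φ : LDLf P) :
    ∃ (σ : Type) (inst : Fintype σ) (N : NFA (Set P) σ),
      (∀ π : List (Set P), π ∈ N.accepts ↔ LDLf.Sat π φ) ∧
      @Fintype.card σ inst ≤ 2 ^ (LDLf.size φ + 2) := by
  exact LdlfNfa.main φ
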